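/- arXiv:1706.01093 — 3 statements merged into one kernel-verified Lean document; each statement's English description precedes it below -/
import Mathlib

section
/- Every compact, connected, locally convex subset of ℝ^m is convex. (Here a set C is locally convex if every point of C has an open neighborhood U in ℝ^m such that C ∩ U is convex.) -/
/-!
Local convexity and compactness give a `δ > 0` such that `C` contains the segment between any
two of its points at distance at most `δ`, and connectedness joins any `x, y ∈ C` by a chain of
points of `C` with steps of length at most `δ`. Among the chains with a fixed number of steps, one
of least energy `∑ dist²` exists by compactness. Replacing an interior vertex `b` (between `a`
and `c`) by the midpoint of the midpoints of its two arms keeps the chain admissible, and in a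
strictly convex space lowers the energy unless `b` is the midpoint of `a` and `c`. Hence the
minimal chain is an arithmetic progression from `x` to `y`, and its steps cover `[x, y]`.
A finite-dimensional space is linearly homeomorphic to a Euclidean, hence strictly convex, one.
-/

open Set Metric
open scoped Convex

/-- Since `w ≤ u + v`, the right-hand side is at most `(u² + v²) / 4 + 3 (u + v)² / 8`, which
forces `(u - v)² ≤ 0`. -/
theorem eq_and_eq_add_of_sq_add_sq_le {u v w : ℝ} (hw : 0 ≤ w) (hwuv : w ≤ u + v)
    (h : u ^ 2 + v ^ 2 ≤ (u / 2 + w / 4) ^ 2 + (v / 2 + w / 4) ^ 2) : u = v ∧ w = u + v := by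
  have huv : u = v := by
    nlinarith [sq_nonneg (u - v), mul_nonneg hw (sub_nonneg.2 hwuv),
      mul_nonneg (sub_nonneg.2 hwuv) (add_nonneg hw (add_nonneg hw hw))]
  subst huv
  exact ⟨rfl, by nlinarith⟩

section Module

variable {E : Type*} [AddCommGroup E] [Module ℝ E] {C : Set E}

theorem eq_lineMap_of_forall_eq_midpoint {g : ℕ → E} {N : ℕ}
    (h : ∀ j, j + 2 ≤ N → g (j + 1) = midpoint ℝ (g j) (g (j + 2))) :
    ∀ k ≤ N, g k = AffineMap.lineMap (g 0) (g 1) (k : ℝ) := by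
  intro k
  induction k using Nat.twoStepInduction with
  | zero => simp
  | one => simp
  | more n ih₀ ih₁ =>
    intro hn
    have hg : g (n + 2) = g (n + 1) - g n + g (n + 1) := by
      have hmid := (h n hn).symm
      rw [midpoint_eq_iff] at hmid
      rw [← hmid, AffineEquiv.pointReflection_apply, vsub_eq_sub, vadd_eq_add]
    rw [hg, ih₀ (by omega), ih₁ (by omega)]
    simp only [AffineMap.lineMap_apply_module]
    push_cast
    module

theorem segment_subset_of_forall_segment_subset (φ : ℝ →ᵃ[ℝ] E) {N : ℕ} (h0 : φ 0 ∈ C)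
    (h : ∀ k < N, [φ k -[ℝ] φ (k + 1)] ⊆ C) : [φ 0 -[ℝ] φ N] ⊆ C := by
  induction N with
  | zero => simpa using h0
  | succ n ih =>
    rw [← image_segment, segment_eq_Icc (by positivity),
      ← Icc_union_Icc_eq_Icc n.cast_nonneg (by simp), image_union, union_subset_iff,
      ← segment_eq_Icc n.cast_nonneg, ← segment_eq_Icc (by simp), image_segment, image_segment]
    exact ⟨ih fun k hk => h k (by omega), by simpa using h n (by omega)⟩

end Module

section StepChains

variable {X : Type*} [MetricSpace X] {C : Set X} {δ : ℝ} {N : ℕ} {x y : X}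

def chainEnergy (N : ℕ) (f : ℕ → X) : ℝ :=
  ∑ i ∈ Finset.range N, dist (f i) (f (i + 1)) ^ 2

theorem continuous_chainEnergy (N : ℕ) : Continuous (chainEnergy (X := X) N) := by
  unfold chainEnergy
  fun_prop

theorem chainEnergy_update_add (f : ℕ → X) {j : ℕ} (hj : j + 2 ≤ N) (z : X) :
    chainEnergy N (Function.update f (j + 1) z) +
        (dist (f j) (f (j + 1)) ^ 2 + dist (f (j + 1)) (f (j + 2)) ^ 2) =
      chainEnergy N f + (dist (f j) z ^ 2 + dist z (f (j + 2)) ^ 2) := by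
  set f' := Function.update f (j + 1) z
  have hdiff : chainEnergy N f' - chainEnergy N f =
      (dist (f' j) (f' (j + 1)) ^ 2 - dist (f j) (f (j + 1)) ^ 2) +
        (dist (f' (j + 1)) (f' (j + 1 + 1)) ^ 2 - dist (f (j + 1)) (f (j + 1 + 1)) ^ 2) := by
    rw [chainEnergy, chainEnergy, ← Finset.sum_sub_distrib]
    refine Finset.sum_eq_add _ _ (by omega) (fun i _ hi => ?_)
      (by simp only [Finset.mem_range, not_lt]; omega)
      (by simp only [Finset.mem_range, not_lt]; omega)
    rw [show f' i = f i from Function.update_of_ne (by omega) _ _,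
      show f' (i + 1) = f (i + 1) from Function.update_of_ne (by omega) _ _, sub_self]
  rw [show f' j = f j from Function.update_of_ne (by omega) _ _,
    show f' (j + 1) = z from Function.update_self _ _ _,
    show f' (j + 1 + 1) = f (j + 2) from Function.update_of_ne (by omega) _ _] at hdiff
  linarith

/-- The values after step `N` are only required to lie in `C`, which makes the set of chains
compact. -/
def stepChains (C : Set X) (δ : ℝ) (N : ℕ) (x y : X) : Set (ℕ → X) :=
  {f | (∀ i, f i ∈ C) ∧ f 0 = x ∧ f N = y ∧ ∀ i < N, dist (f i) (f (i + 1)) ≤ δ}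

theorem isCompact_stepChains (hcomp : IsCompact C) (N : ℕ) (x y : X) :
    IsCompact (stepChains C δ N x y) := by
  refine (isCompact_pi_infinite fun _ => hcomp).of_isClosed_subset ?_ fun f hf => hf.1
  simp only [stepChains, ofPred_and, ofPred_forall]
  refine .inter (isClosed_iInter fun i => hcomp.isClosed.preimage (continuous_apply i))
    (.inter (isClosed_eq (continuous_apply 0) continuous_const)
      (.inter (isClosed_eq (continuous_apply N) continuous_const)
        (isClosed_iInter fun i => isClosed_iInter fun _ => isClosed_le ?_ continuous_const)))
  fun_prop

theorem update_mem_stepChains {f : ℕ → X} (hf : f ∈ stepChains C δ N x y) {j : ℕ}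
    (hj : j + 2 ≤ N) {z : X} (hz : z ∈ C) (hjz : dist (f j) z ≤ δ)
    (hzj : dist z (f (j + 2)) ≤ δ) : Function.update f (j + 1) z ∈ stepChains C δ N x y := by
  obtain ⟨hfC, hf0, hfN, hfδ⟩ := hf
  refine ⟨fun i => ?_, by simpa using hf0, by simpa [show N ≠ j + 1 by omega] using hfN,
    fun i hi => ?_⟩
  · rcases eq_or_ne i (j + 1) with rfl | hi
    · simpa using hz
    · simpa [hi] using hfC i
  · rcases eq_or_ne i j with rfl | hij
    · simpa using hjz
    rcases eq_or_ne i (j + 1) with rfl | hij'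
    · simpa using hzj
    rw [Function.update_of_ne hij', Function.update_of_ne (by omega)]
    exact hfδ i hi

theorem exists_stepChains_of_reflTransGen (hx : x ∈ C)
    (h : Relation.ReflTransGen (fun p q => q ∈ C ∧ dist p q ≤ δ) x y) :
    ∃ N, (stepChains C δ N x y).Nonempty := by
  induction h with
  | refl => exact ⟨0, fun _ => x, fun _ => hx, rfl, rfl, fun i hi => absurd hi i.not_lt_zero⟩
  | @tail b c _ hbc ih =>
    obtain ⟨N, f, hfC, hf0, hfN, hfδ⟩ := ih
    refine ⟨N + 1, Function.update f (N + 1) c, fun i => ?_, by simpa using hf0, by simp,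
      fun i hi => ?_⟩
    · rcases eq_or_ne i (N + 1) with rfl | hi
      · simpa using hbc.1
      · simpa [hi] using hfC i
    · rcases Nat.lt_succ_iff_lt_or_eq.1 hi with hi | rfl
      · rw [Function.update_of_ne (by omega), Function.update_of_ne (by omega)]
        exact hfδ i hi
      · simpa [hfN] using hbc.2

theorem IsPreconnected.exists_stepChains (hconn : IsPreconnected C) (hδ : 0 < δ)
    (hx : x ∈ C) (hy : y ∈ C) : ∃ N, (stepChains C δ N x y).Nonempty := by
  refine exists_stepChains_of_reflTransGen hx <|
    hconn.induction₂' _ (fun p hp => ?_) (fun _ _ _ _ _ _ => .trans) hx hy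
  filter_upwards [self_mem_nhdsWithin, mem_nhdsWithin_of_mem_nhds (closedBall_mem_nhds p hδ)]
    with q hq hpq
  exact ⟨.single ⟨hq, by rwa [dist_comm]⟩, .single ⟨hp, hpq⟩⟩

end StepChains

section Seminormed

variable {E : Type*} [SeminormedAddCommGroup E] [NormedSpace ℝ E] {C : Set E} {δ : ℝ}

theorem IsCompact.exists_pos_segment_subset_of_locallyConvex (hcomp : IsCompact C)
    (hloc : ∀ x ∈ C, ∃ U : Set E, IsOpen U ∧ x ∈ U ∧ Convex ℝ (C ∩ U)) :
    ∃ δ > 0, ∀ p ∈ C, ∀ q ∈ C, dist p q ≤ δ → [p -[ℝ] q] ⊆ C := by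
  choose U hUo hxU hUc using hloc
  obtain ⟨ε, hε, hball⟩ := lebesgue_number_lemma_of_metric (c := fun x : C => U x x.2) hcomp
    (fun x => hUo x x.2) (fun x hx => mem_iUnion.2 ⟨⟨x, hx⟩, hxU x hx⟩)
  refine ⟨ε / 2, half_pos hε, fun p hp q hq hpq => ?_⟩
  obtain ⟨i, hi⟩ := hball p hp
  have hqU : q ∈ U i i.2 := hi (by rw [mem_ball, dist_comm]; linarith)
  exact ((hUc i i.2).segment_subset ⟨hp, hi (mem_ball_self hε)⟩ ⟨hq, hqU⟩).trans
    inter_subset_left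

theorem dist_midpoint_midpoint_left_le (a b c : E) :
    dist a (midpoint ℝ (midpoint ℝ a b) (midpoint ℝ b c)) ≤ dist a b / 2 + dist a c / 4 := by
  have hAB : dist (midpoint ℝ a b) (midpoint ℝ b c) ≤ dist a c / 2 := by
    simpa [midpoint_comm b c] using dist_midpoint_midpoint_le' (𝕜 := ℝ) a b c b
  calc dist a (midpoint ℝ (midpoint ℝ a b) (midpoint ℝ b c))
      ≤ dist a (midpoint ℝ a b) +
          dist (midpoint ℝ a b) (midpoint ℝ (midpoint ℝ a b) (midpoint ℝ b c)) :=
        dist_triangle _ _ _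
    _ = dist a b / 2 + dist (midpoint ℝ a b) (midpoint ℝ b c) / 2 := by
      simp only [dist_left_midpoint, Real.norm_ofNat]; ring
    _ ≤ dist a b / 2 + dist a c / 4 := by linarith

theorem dist_midpoint_midpoint_right_le (a b c : E) :
    dist (midpoint ℝ (midpoint ℝ a b) (midpoint ℝ b c)) c ≤ dist b c / 2 + dist a c / 4 := by
  simpa only [midpoint_comm c b, midpoint_comm b a, midpoint_comm (midpoint ℝ b c), dist_comm c]
    using dist_midpoint_midpoint_left_le c b a

theorem midpoint_midpoint_mem_of_dist_le
    (hC : ∀ p ∈ C, ∀ q ∈ C, dist p q ≤ δ → [p -[ℝ] q] ⊆ C) {a b c : E}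
    (ha : a ∈ C) (hb : b ∈ C) (hc : c ∈ C) (hab : dist a b ≤ δ) (hbc : dist b c ≤ δ) :
    midpoint ℝ (midpoint ℝ a b) (midpoint ℝ b c) ∈ C := by
  have hA := hC a ha b hb hab (midpoint_mem_segment a b)
  have hB := hC b hb c hc hbc (midpoint_mem_segment b c)
  refine hC _ hA _ hB ?_ (midpoint_mem_segment _ _)
  calc _ ≤ (dist a b + dist b c) / 2 := by
        simpa using dist_midpoint_midpoint_le' (𝕜 := ℝ) a b b c
    _ ≤ δ := by linarith

end Seminormed

section StrictConvex

variable {E : Type*} [NormedAddCommGroup E] [NormedSpace ℝ E] [StrictConvexSpace ℝ E]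
  {C : Set E} {δ : ℝ} {N : ℕ} {x y : E}

theorem eq_midpoint_of_sq_dist_add_sq_dist_le {a b c : E}
    (h : dist a b ^ 2 + dist b c ^ 2 ≤
      dist a (midpoint ℝ (midpoint ℝ a b) (midpoint ℝ b c)) ^ 2 +
        dist (midpoint ℝ (midpoint ℝ a b) (midpoint ℝ b c)) c ^ 2) :
    b = midpoint ℝ a c := by
  have hle := add_le_add (pow_le_pow_left₀ dist_nonneg (dist_midpoint_midpoint_left_le a b c) 2)
    (pow_le_pow_left₀ dist_nonneg (dist_midpoint_midpoint_right_le a b c) 2)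
  obtain ⟨huv, hw⟩ :=
    eq_and_eq_add_of_sq_add_sq_le dist_nonneg (dist_triangle a b c) (h.trans hle)
  exact eq_midpoint_of_dist_eq_half (by linarith) (by linarith)

theorem eq_midpoint_of_isMinOn_chainEnergy
    (hC : ∀ p ∈ C, ∀ q ∈ C, dist p q ≤ δ → [p -[ℝ] q] ⊆ C) {g : ℕ → E}
    (hg : g ∈ stepChains C δ N x y) (hmin : IsMinOn (chainEnergy N) (stepChains C δ N x y) g)
    {j : ℕ} (hj : j + 2 ≤ N) : g (j + 1) = midpoint ℝ (g j) (g (j + 2)) := by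
  have hu := hg.2.2.2 j (by omega)
  have hv := hg.2.2.2 (j + 1) (by omega)
  have hw := dist_triangle (g j) (g (j + 1)) (g (j + 2))
  have hzC := midpoint_midpoint_mem_of_dist_le hC (hg.1 j) (hg.1 (j + 1)) (hg.1 (j + 2)) hu hv
  have hjz := dist_midpoint_midpoint_left_le (g j) (g (j + 1)) (g (j + 2))
  have hzj := dist_midpoint_midpoint_right_le (g j) (g (j + 1)) (g (j + 2))
  set z := midpoint ℝ (midpoint ℝ (g j) (g (j + 1))) (midpoint ℝ (g (j + 1)) (g (j + 2)))
  have hle : chainEnergy N g ≤ chainEnergy N (Function.update g (j + 1) z) :=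
    isMinOn_iff.1 hmin _ (update_mem_stepChains hg hj hzC (by linarith) (by linarith))
  have henergy := chainEnergy_update_add g hj z
  exact eq_midpoint_of_sq_dist_add_sq_dist_le (by linarith)

theorem segment_subset_of_isMinOn_chainEnergy
    (hC : ∀ p ∈ C, ∀ q ∈ C, dist p q ≤ δ → [p -[ℝ] q] ⊆ C) {g : ℕ → E}
    (hg : g ∈ stepChains C δ N x y) (hmin : IsMinOn (chainEnergy N) (stepChains C δ N x y) g) :
    [x -[ℝ] y] ⊆ C := by
  have hline := eq_lineMap_of_forall_eq_midpoint fun j hj =>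
    eq_midpoint_of_isMinOn_chainEnergy hC hg hmin hj
  obtain ⟨hgC, rfl, rfl, hgδ⟩ := hg
  have := segment_subset_of_forall_segment_subset (AffineMap.lineMap (g 0) (g 1)) (N := N)
    (by simpa using hgC 0) fun k hk => ?_
  · rwa [← hline N le_rfl, AffineMap.lineMap_apply_zero] at this
  · have := hC _ (hgC k) _ (hgC (k + 1)) (hgδ k hk)
    rwa [hline k hk.le, hline (k + 1) hk, Nat.cast_succ] at this

theorem IsCompact.convex_of_isPreconnected_of_locallyConvex_of_strictConvexSpace
    (hcomp : IsCompact C) (hconn : IsPreconnected C)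
    (hloc : ∀ x ∈ C, ∃ U : Set E, IsOpen U ∧ x ∈ U ∧ Convex ℝ (C ∩ U)) : Convex ℝ C := by
  obtain ⟨δ, hδ, hC⟩ := hcomp.exists_pos_segment_subset_of_locallyConvex hloc
  refine convex_iff_segment_subset.2 fun x hx y hy => ?_
  obtain ⟨N, f, hf⟩ := hconn.exists_stepChains hδ hx hy
  obtain ⟨g, hg, hmin⟩ := (isCompact_stepChains hcomp N x y).exists_isMinOn ⟨f, hf⟩
    (continuous_chainEnergy N).continuousOn
  exact segment_subset_of_isMinOn_chainEnergy hC hg hmin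

end StrictConvex

theorem IsCompact.convex_of_isPreconnected_of_locallyConvex
    {F : Type*} [AddCommGroup F] [TopologicalSpace F] [IsTopologicalAddGroup F] [T2Space F]
    [Module ℝ F] [ContinuousSMul ℝ F] [FiniteDimensional ℝ F] {C : Set F}
    (hcomp : IsCompact C) (hconn : IsPreconnected C)
    (hloc : ∀ x ∈ C, ∃ U : Set F, IsOpen U ∧ x ∈ U ∧ Convex ℝ (C ∩ U)) : Convex ℝ C := by
  let e := (toEuclidean : F ≃L[ℝ] _).symm
  have hconv : Convex ℝ (e ⁻¹' C) := by
    refine IsCompact.convex_of_isPreconnected_of_locallyConvex_of_strictConvexSpace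
      (e.toHomeomorph.isCompact_preimage.2 hcomp)
      (e.toHomeomorph.isPreconnected_preimage.2 hconn) fun x hx => ?_
    obtain ⟨U, hUo, hxU, hUc⟩ := hloc (e x) hx
    exact ⟨e ⁻¹' U, hUo.preimage e.continuous, hxU, hUc.linear_preimage e.toLinearMap⟩
  simpa [e] using hconv.linear_preimage e.symm.toLinearMap

/-- Compact version of the Tietze–Nakajima theorem: every compact, connected,
locally convex subset of ℝ^m is convex. -/
theorem compact_connected_locallyConvex_is_convex
    (m : ℕ) (C : Set (Fin m → ℝ))
    (hcomp : IsCompact C) (hconn : IsConnected C)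
    (hloc : ∀ x ∈ C, ∃ U : Set (Fin m → ℝ), IsOpen U ∧ x ∈ U ∧ Convex ℝ (C ∩ U)) :
    Convex ℝ C :=
  hcomp.convex_of_isPreconnected_of_locallyConvex hconn.isPreconnected hloc
end

section
/- Every closed, connected, locally convex subset of ℝ^n is convex. -/
/-!
Local convexity and connectedness let any two points `u, v` of `C` be joined by a polygonal line
in `C`; let `ρ(u, v)` be the infimum of the lengths of such lines. If `ε` is a uniform radius of
local convexity, `[u, v] ⊆ C` as soon as `ρ(u, v) < ε`, and this doubles up to every `ρ(u, v)`:
by compactness there is a `ρ`-midpoint `w`, both halves `[u, w]` and `[w, v]` lie in `C` by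
induction, and if `w` were off `[u, v]` then, the norm being strictly convex, cutting the corner
at `w` inside a convex neighbourhood would give a polygonal line shorter than `ρ(u, v)`.
-/

open Set Metric Filter Topology AffineMap

theorem Wbtw.segment_subset_union {𝕜 E : Type*} [Field 𝕜] [LinearOrder 𝕜] [IsStrictOrderedRing 𝕜]
    [AddCommGroup E] [Module 𝕜 E] {x y z : E} (h : Wbtw 𝕜 x y z) :
    segment 𝕜 x z ⊆ segment 𝕜 x y ∪ segment 𝕜 y z := by
  intro p hp
  rw [mem_segment_iff_wbtw] at hp
  rw [mem_union, mem_segment_iff_wbtw, mem_segment_iff_wbtw]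
  obtain ⟨s, hs, rfl⟩ := h
  obtain ⟨t, ht, rfl⟩ := hp
  rcases wbtw_or_wbtw_smul_vadd_of_nonneg x (z -ᵥ x) ht.1 hs.1 with h | h
  · exact Or.inl h
  · exact Or.inr (Wbtw.trans_left_right ⟨t, ht, rfl⟩ h)

variable {E F : Type*}

section LocallyConvex

variable [AddCommGroup E] [Module ℝ E] [TopologicalSpace E]

def IsLocallyConvex (C : Set E) : Prop :=
  ∀ x ∈ C, ∃ U : Set E, IsOpen U ∧ x ∈ U ∧ Convex ℝ (C ∩ U)

variable {C : Set E}

theorem IsLocallyConvex.preimage [AddCommGroup F] [Module ℝ F] [TopologicalSpace F]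
    (hC : IsLocallyConvex C) (f : F →L[ℝ] E) : IsLocallyConvex (f ⁻¹' C) := by
  intro x hx
  obtain ⟨U, hU, hxU, hconv⟩ := hC (f x) hx
  refine ⟨f ⁻¹' U, hU.preimage f.continuous, hxU, ?_⟩
  rw [← preimage_inter]
  exact hconv.linear_preimage (f : F →ₗ[ℝ] E)

theorem IsLocallyConvex.eventually_segment_subset (hC : IsLocallyConvex C) {x : E} (hx : x ∈ C) :
    ∀ᶠ y in 𝓝[C] x, segment ℝ x y ⊆ C := by
  obtain ⟨U, hU, hxU, hconv⟩ := hC x hx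
  filter_upwards [self_mem_nhdsWithin, mem_nhdsWithin_of_mem_nhds (hU.mem_nhds hxU)]
    with y hyC hyU
  exact (hconv.segment_subset ⟨hx, hxU⟩ ⟨hyC, hyU⟩).trans inter_subset_left

end LocallyConvex

section PolygonalPath

variable [SeminormedAddCommGroup E] [NormedSpace ℝ E] {C : Set E} {x y z : E} {L L₁ L₂ : ℝ}

/-- Some polygonal line of length `L` joins `x` to `y` inside `C`. -/
inductive PolygonalPath (C : Set E) : E → E → ℝ → Prop
  | refl (x : E) : PolygonalPath C x x 0
  | tail {x y z : E} {L : ℝ} : PolygonalPath C x y L → segment ℝ y z ⊆ C →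
      PolygonalPath C x z (L + dist y z)

namespace PolygonalPath

theorem of_segment_subset (h : segment ℝ x y ⊆ C) : PolygonalPath C x y (dist x y) := by
  simpa using (refl x).tail h

theorem trans (h₁ : PolygonalPath C x y L₁) (h₂ : PolygonalPath C y z L₂) :
    PolygonalPath C x z (L₁ + L₂) := by
  induction h₂ with
  | refl => simpa
  | tail _ hs ih => simpa [add_assoc] using ih.tail hs

theorem symm (h : PolygonalPath C x y L) : PolygonalPath C y x L := by
  induction h with
  | refl => exact refl _
  | tail _ hs ih =>
    rw [add_comm, dist_comm]
    exact (of_segment_subset (by rwa [segment_symm])).trans ih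

theorem dist_le (h : PolygonalPath C x y L) : dist x y ≤ L := by
  induction h with
  | refl => simp
  | tail _ _ ih => exact (dist_triangle _ _ _).trans (by linarith)

theorem mem_right (h : PolygonalPath C x y L) (hx : x ∈ C) : y ∈ C := by
  induction h with
  | refl => exact hx
  | tail _ hs _ => exact hs (right_mem_segment _ _ _)

theorem exists_split (h : PolygonalPath C x y L) {c : ℝ} (hc₀ : 0 ≤ c) (hcL : c ≤ L) :
    ∃ w, PolygonalPath C x w c ∧ PolygonalPath C w y (L - c) := by
  induction h generalizing c with
  | refl =>
    obtain rfl : c = 0 := le_antisymm hcL hc₀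
    exact ⟨x, refl x, by simpa using refl x⟩
  | @tail y z L hxy hyz ih =>
    rcases le_total c L with hc | hc
    · obtain ⟨w, hxw, hwy⟩ := ih hc₀ hc
      exact ⟨w, hxw, by simpa [sub_add_eq_add_sub] using hwy.tail hyz⟩
    · obtain hyz₀ | hyz₀ := (dist_nonneg (x := y) (y := z)).eq_or_lt
      · obtain rfl : c = L := by linarith
        exact ⟨y, hxy, by simpa [← hyz₀] using (refl y).tail hyz⟩
      set w := lineMap y z ((c - L) / dist y z)
      have hw : w ∈ segment ℝ y z :=
        lineMap_mem_segment ℝ _ _ ⟨by positivity, (div_le_one hyz₀).2 (by linarith)⟩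
      have hyw : dist y w = c - L := by
        rw [dist_comm, dist_lineMap_left, Real.norm_of_nonneg (by positivity),
          div_mul_cancel₀ _ hyz₀.ne']
      have hwz : dist w z = L + dist y z - c := by
        linarith [dist_add_dist_of_mem_segment hw]
      refine ⟨w, ?_, ?_⟩
      · simpa [hyw] using hxy.tail ((convex_segment y z).segment_subset
          (left_mem_segment _ _ _) hw |>.trans hyz)
      · simpa [hwz] using (of_segment_subset ((convex_segment y z).segment_subset hw
          (right_mem_segment _ _ _) |>.trans hyz))

end PolygonalPath

/-- Junk value `0` when no polygonal line in `C` joins `x` to `y`. -/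
noncomputable def polygonalDist (C : Set E) (x y : E) : ℝ :=
  sInf {L | PolygonalPath C x y L}

theorem PolygonalPath.polygonalDist_le (h : PolygonalPath C x y L) : polygonalDist C x y ≤ L :=
  csInf_le ⟨0, fun _ h => dist_nonneg.trans h.dist_le⟩ h

theorem dist_le_polygonalDist (h : ∃ L, PolygonalPath C x y L) :
    dist x y ≤ polygonalDist C x y :=
  le_csInf h fun _ => PolygonalPath.dist_le

theorem polygonalDist_le_dist (h : segment ℝ x y ⊆ C) : polygonalDist C x y ≤ dist x y :=
  (PolygonalPath.of_segment_subset h).polygonalDist_le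

theorem polygonalDist_comm (C : Set E) (x y : E) : polygonalDist C x y = polygonalDist C y x :=
  congrArg sInf (Set.ext fun _ => ⟨PolygonalPath.symm, PolygonalPath.symm⟩)

theorem exists_polygonalPath_lt_polygonalDist_add (h : ∃ L, PolygonalPath C x y L) {η : ℝ}
    (hη : 0 < η) : ∃ L, PolygonalPath C x y L ∧ L < polygonalDist C x y + η :=
  Real.lt_sInf_add_pos h hη

theorem polygonalDist_triangle (hxy : ∃ L, PolygonalPath C x y L)
    (hyz : ∃ L, PolygonalPath C y z L) :
    polygonalDist C x z ≤ polygonalDist C x y + polygonalDist C y z := by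
  refine le_of_forall_pos_lt_add fun η hη => ?_
  obtain ⟨L₁, h₁, hL₁⟩ := exists_polygonalPath_lt_polygonalDist_add hxy (half_pos hη)
  obtain ⟨L₂, h₂, hL₂⟩ := exists_polygonalPath_lt_polygonalDist_add hyz (half_pos hη)
  exact (h₁.trans h₂).polygonalDist_le.trans_lt (by linarith)

end PolygonalPath

section Normed

variable [SeminormedAddCommGroup E] [NormedSpace ℝ E] {C : Set E} {x y u v w : E}

theorem IsLocallyConvex.exists_polygonalPath (hC : IsLocallyConvex C) (hconn : IsPreconnected C)
    (hx : x ∈ C) (hy : y ∈ C) : ∃ L, PolygonalPath C x y L :=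
  hconn.induction₂ (fun x y => ∃ L, PolygonalPath C x y L)
    (fun _ hx => (hC.eventually_segment_subset hx).mono
      fun _ h => ⟨_, PolygonalPath.of_segment_subset h⟩)
    (fun _ _ _ _ _ _ ⟨_, h₁⟩ ⟨_, h₂⟩ => ⟨_, h₁.trans h₂⟩)
    (fun _ _ _ _ ⟨L, h⟩ => ⟨L, h.symm⟩) hx hy

theorem IsLocallyConvex.exists_forall_convex_inter_ball (hC : IsLocallyConvex C) {K : Set E}
    (hK : IsCompact K) (hKC : K ⊆ C) : ∃ ε > 0, ∀ z ∈ K, Convex ℝ (C ∩ ball z ε) := by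
  obtain ⟨ε, hε, hball⟩ := lebesgue_number_lemma_of_metric hK
    (c := fun U : {U : Set E // IsOpen U ∧ Convex ℝ (C ∩ U)} => (U : Set E)) (fun U => U.2.1)
    fun z hz => by
      obtain ⟨U, hU, hzU, hconv⟩ := hC z (hKC hz)
      exact mem_iUnion.2 ⟨⟨U, hU, hconv⟩, hzU⟩
  refine ⟨ε, hε, fun z hz => ?_⟩
  obtain ⟨U, hzU⟩ := hball z hz
  rw [← inter_eq_right.2 hzU, ← inter_assoc]
  exact U.2.2.inter (convex_ball z ε)

theorem IsLocallyConvex.continuousOn_polygonalDist (hC : IsLocallyConvex C)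
    (hpath : ∀ y ∈ C, ∃ L, PolygonalPath C u y L) : ContinuousOn (polygonalDist C u) C := by
  intro w hw
  have hlip : ∀ᶠ p in 𝓝[C] w, dist (polygonalDist C u p) (polygonalDist C u w) ≤ dist p w := by
    filter_upwards [self_mem_nhdsWithin, hC.eventually_segment_subset hw] with p hp hwp
    have hpw : segment ℝ p w ⊆ C := by rwa [segment_symm]
    have h₁ := polygonalDist_triangle (hpath w hw) ⟨_, .of_segment_subset hwp⟩
    have h₂ := polygonalDist_triangle (hpath p hp) ⟨_, .of_segment_subset hpw⟩
    rw [Real.dist_eq, abs_sub_le_iff]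
    constructor <;> linarith [polygonalDist_le_dist hwp, polygonalDist_le_dist hpw, dist_comm p w]
  rw [ContinuousWithinAt, tendsto_iff_dist_tendsto_zero]
  refine squeeze_zero' (.of_forall fun _ => dist_nonneg) hlip ?_
  exact ((continuous_id.dist continuous_const).tendsto' w 0 (dist_self w)).mono_left
    nhdsWithin_le_nhds

theorem IsLocallyConvex.exists_polygonalDist_midpoint [ProperSpace E] (hC : IsLocallyConvex C)
    (hcl : IsClosed C) (hpath : ∀ x ∈ C, ∀ y ∈ C, ∃ L, PolygonalPath C x y L)
    (hu : u ∈ C) (hv : v ∈ C) :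
    ∃ w ∈ C, polygonalDist C u w ≤ polygonalDist C u v / 2 ∧
      polygonalDist C w v ≤ polygonalDist C u v / 2 := by
  set r := polygonalDist C u v
  set K := C ∩ closedBall u (r + 1)
  set f := fun w => max (polygonalDist C u w) (polygonalDist C v w)
  have happrox : ∀ η ∈ Ioc (0 : ℝ) 1, ∃ z ∈ K, f z ≤ (r + η) / 2 := by
    rintro η ⟨hη₀, hη₁⟩
    obtain ⟨L, hL, hLr⟩ := exists_polygonalPath_lt_polygonalDist_add (hpath u hu v hv) hη₀
    have hL₀ : 0 ≤ L := dist_nonneg.trans hL.dist_le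
    obtain ⟨z, huz, hzv⟩ := hL.exists_split (c := L / 2) (by positivity) (by linarith)
    refine ⟨z, ⟨huz.mem_right hu, ?_⟩, max_le ?_ ?_⟩
    · rw [mem_closedBall, dist_comm]; linarith [huz.dist_le]
    · linarith [huz.polygonalDist_le]
    · linarith [hzv.symm.polygonalDist_le]
  obtain ⟨z, hzK, -⟩ := happrox 1 ⟨one_pos, le_rfl⟩
  obtain ⟨w, hwK, hmin⟩ := ((isCompact_closedBall u (r + 1)).inter_left hcl).exists_isMinOn
    ⟨z, hzK⟩ (((hC.continuousOn_polygonalDist (hpath u hu)).sup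
      (hC.continuousOn_polygonalDist (hpath v hv))).mono inter_subset_left)
  have hfw : f w ≤ r / 2 := by
    refine le_of_forall_pos_le_add fun η hη => ?_
    obtain ⟨z, hzK, hz⟩ := happrox (min η 1) ⟨lt_min hη one_pos, min_le_right _ _⟩
    linarith [isMinOn_iff.1 hmin z hzK, min_le_left η 1]
  refine ⟨w, hwK.1, (le_max_left _ _).trans hfw, ?_⟩
  rw [polygonalDist_comm]
  exact (le_max_right _ _).trans hfw

end Normed

section StrictConvex

variable [NormedAddCommGroup E] [NormedSpace ℝ E] [StrictConvexSpace ℝ E] {C : Set E} {u v w : E}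

theorem dist_lineMap_add_dist_lineMap_add_dist_lineMap_lt (h : ¬ Wbtw ℝ u w v) {t : ℝ}
    (ht₀ : 0 < t) (ht₁ : t ≤ 1) :
    dist u (lineMap w u t) + dist (lineMap w u t) (lineMap w v t) + dist (lineMap w v t) v <
      dist u w + dist w v := by
  have hu : dist u (lineMap w u t) = (1 - t) * dist u w := by
    rw [dist_comm, dist_lineMap_right, Real.norm_of_nonneg (by linarith), dist_comm]
  have hv : dist (lineMap w v t) v = (1 - t) * dist w v := by
    rw [dist_lineMap_right, Real.norm_of_nonneg (by linarith)]
  have huv : dist (lineMap w u t) (lineMap w v t) = t * dist u v := by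
    rw [lineMap_apply_module', lineMap_apply_module', dist_eq_norm, dist_eq_norm,
      show t • (u - w) + w - (t • (v - w) + w) = t • (u - v) by module, norm_smul,
      Real.norm_of_nonneg ht₀.le]
  have hlt : t * dist u v < t * (dist u w + dist w v) :=
    mul_lt_mul_of_pos_left (dist_lt_dist_add_dist_iff.2 h) ht₀
  rw [hu, huv, hv]
  linarith

theorem wbtw_of_dist_add_dist_le_polygonalDist {U : Set E} (hU : U ∈ 𝓝 w)
    (hconv : Convex ℝ (C ∩ U)) (huw : segment ℝ u w ⊆ C) (hwv : segment ℝ w v ⊆ C)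
    (hle : dist u w + dist w v ≤ polygonalDist C u v) : Wbtw ℝ u w v := by
  by_contra hbtw
  have hnear : ∀ p, ∀ᶠ t in 𝓝[>] (0 : ℝ), lineMap w p t ∈ U := fun p =>
    ((lineMap_continuous.tendsto' 0 w (lineMap_apply_zero w p)).eventually hU).filter_mono
      nhdsWithin_le_nhds
  have hunit : ∀ᶠ t in 𝓝[>] (0 : ℝ), t ∈ Ioc 0 1 := Ioc_mem_nhdsGT one_pos
  obtain ⟨t, ⟨ht₀, ht₁⟩, haU, hbU⟩ := (hunit.and ((hnear u).and (hnear v))).exists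
  set a := lineMap w u t
  set b := lineMap w v t
  have ha : a ∈ segment ℝ u w := segment_symm ℝ w u ▸ lineMap_mem_segment ℝ w u ⟨ht₀.le, ht₁⟩
  have hb : b ∈ segment ℝ w v := lineMap_mem_segment ℝ w v ⟨ht₀.le, ht₁⟩
  have hua : segment ℝ u a ⊆ C :=
    ((convex_segment u w).segment_subset (left_mem_segment _ _ _) ha).trans huw
  have hab : segment ℝ a b ⊆ C :=
    (hconv.segment_subset ⟨huw ha, haU⟩ ⟨hwv hb, hbU⟩).trans inter_subset_left
  have hbv : segment ℝ b v ⊆ C :=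
    ((convex_segment w v).segment_subset hb (right_mem_segment _ _ _)).trans hwv
  have hshort := (((PolygonalPath.of_segment_subset hua).trans (.of_segment_subset hab)).trans
    (.of_segment_subset hbv)).polygonalDist_le
  linarith [dist_lineMap_add_dist_lineMap_add_dist_lineMap_lt hbtw ht₀ ht₁]

variable [ProperSpace E]

/-- The budget `dist u x₀ + ρ(u, v) ≤ R` passes to both halves of a `ρ`-midpoint split, so every
point met stays in `closedBall x₀ R`, where `ε` is a radius of local convexity. -/
theorem IsLocallyConvex.segment_subset_of_polygonalDist_lt (hC : IsLocallyConvex C)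
    (hcl : IsClosed C) (hpath : ∀ x ∈ C, ∀ y ∈ C, ∃ L, PolygonalPath C x y L) {x₀ : E}
    {R ε : ℝ} (hε₀ : 0 < ε) (hε : ∀ z ∈ C ∩ closedBall x₀ R, Convex ℝ (C ∩ ball z ε)) (k : ℕ) :
    ∀ ⦃u⦄, u ∈ C → ∀ ⦃v⦄, v ∈ C → dist u x₀ + polygonalDist C u v ≤ R →
      polygonalDist C u v < ε * 2 ^ k → segment ℝ u v ⊆ C := by
  induction k with
  | zero =>
    intro u hu v hv hR hlt
    have huv := dist_le_polygonalDist (hpath u hu v hv)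
    have hu' : u ∈ C ∩ closedBall x₀ R :=
      ⟨hu, by rw [mem_closedBall]; linarith [dist_nonneg (x := u) (y := v)]⟩
    refine ((hε u hu').segment_subset ⟨hu, mem_ball_self hε₀⟩ ⟨hv, ?_⟩).trans inter_subset_left
    rw [mem_ball, dist_comm]
    simp only [pow_zero, mul_one] at hlt
    linarith
  | succ k ih =>
    intro u hu v hv hR hlt
    obtain ⟨w, hw, huw, hwv⟩ := hC.exists_polygonalDist_midpoint hcl hpath hu hv
    have hduw := dist_le_polygonalDist (hpath u hu w hw)
    have hdwv := dist_le_polygonalDist (hpath w hw v hv)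
    have hdw := dist_triangle w u x₀
    have hρ := dist_nonneg.trans (dist_le_polygonalDist (hpath u hu v hv))
    rw [pow_succ] at hlt
    have hsuw : segment ℝ u w ⊆ C := ih hu hw (by linarith) (by linarith)
    have hswv : segment ℝ w v ⊆ C := ih hw hv (by linarith [dist_comm u w]) (by linarith)
    have hw' : w ∈ C ∩ closedBall x₀ R := ⟨hw, by rw [mem_closedBall]; linarith [dist_comm u w]⟩
    have hbtw : Wbtw ℝ u w v := wbtw_of_dist_add_dist_le_polygonalDist (ball_mem_nhds w hε₀)
      (hε w hw') hsuw hswv (by linarith)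
    exact hbtw.segment_subset_union.trans (union_subset hsuw hswv)

theorem IsLocallyConvex.convex_of_isClosed_of_isPreconnected (hC : IsLocallyConvex C)
    (hcl : IsClosed C) (hconn : IsPreconnected C) : Convex ℝ C := by
  have hpath : ∀ x ∈ C, ∀ y ∈ C, ∃ L, PolygonalPath C x y L :=
    fun _ hx _ hy => hC.exists_polygonalPath hconn hx hy
  refine convex_iff_segment_subset.2 fun x hx y hy => ?_
  obtain ⟨ε, hε₀, hε⟩ := hC.exists_forall_convex_inter_ball
    ((isCompact_closedBall x (polygonalDist C x y)).inter_left hcl) inter_subset_left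
  obtain ⟨k, hk⟩ := pow_unbounded_of_one_lt (polygonalDist C x y / ε) one_lt_two
  exact hC.segment_subset_of_polygonalDist_lt hcl hpath hε₀ hε k hx hy (by simp)
    ((div_lt_iff₀' hε₀).1 hk)

end StrictConvex

theorem IsLocallyConvex.convex [AddCommGroup E] [TopologicalSpace E] [IsTopologicalAddGroup E]
    [T2Space E] [Module ℝ E] [ContinuousSMul ℝ E] [FiniteDimensional ℝ E] {C : Set E}
    (hC : IsLocallyConvex C) (hcl : IsClosed C) (hconn : IsPreconnected C) : Convex ℝ C := by
  let e := toEuclidean (E := E)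
  have hC' : IsLocallyConvex (e.symm ⁻¹' C) := hC.preimage e.symm.toContinuousLinearMap
  have hconv : Convex ℝ (e.symm ⁻¹' C) :=
    hC'.convex_of_isClosed_of_isPreconnected
      (hcl.preimage e.symm.continuous)
      (by rw [← e.image_eq_preimage_symm]; exact hconn.image e e.continuous.continuousOn)
  simpa using hconv.linear_preimage (e : E →ₗ[ℝ] _)

/-- Tietze–Nakajima theorem: every closed, connected, locally convex subset of ℝ^n
is convex. -/
theorem closed_connected_locallyConvex_is_convex
    (n : ℕ) (C : Set (Fin n → ℝ))
    (hclosed : IsClosed C) (hconn : IsConnected C)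
    (hloc : ∀ x ∈ C, ∃ U : Set (Fin n → ℝ), IsOpen U ∧ x ∈ U ∧ Convex ℝ (C ∩ U)) :
    Convex ℝ C :=
  IsLocallyConvex.convex hloc hclosed hconn.isPreconnected
end

section
/- Let C ⊆ ℝ^m be closed and locally convex (every point of C has an open neighborhood U with C ∩ U convex) and let x ∈ C. Then the star S(x) = {y ∈ C : [x,y] ⊆ C} is open in the subspace topology of C; that is, for every y ∈ S(x) there is an open neighborhood V of y in ℝ^m such that C ∩ V ⊆ S(x). -/
set_option maxHeartbeats 1000000

open Metric Set

section aux
variable {E : Type*} [NormedAddCommGroup E] [NormedSpace ℝ E]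

lemma conv_shrink (C s t : Set E) (h : Convex ℝ (C ∩ s)) (ht : Convex ℝ t)
    (hsub : t ⊆ s) : Convex ℝ (C ∩ t) := by
  have heq : C ∩ t = (C ∩ s) ∩ t := by
    ext q
    exact ⟨fun ⟨h1, h2⟩ => ⟨⟨h1, hsub h2⟩, h2⟩, fun ⟨⟨h1, _⟩, h2⟩ => ⟨h1, h2⟩⟩
  rw [heq]
  exact h.inter ht

lemma lemA (C : Set E) (u v w : E) (ε : ℝ) (hε : 0 < ε)
    (huv : segment ℝ u v ⊆ C) (hvw : segment ℝ v w ⊆ C)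
    (hd2 : ‖w - v‖ < ε / 2)
    (hleb : ∀ p ∈ segment ℝ u v, Convex ℝ (C ∩ ball p ε)) :
    ∃ lam : ℝ, 0 < lam ∧ lam ≤ 1 ∧ segment ℝ u (v + lam • (w - v)) ⊆ C := by
  set d1 := ‖v - u‖ with hd1def
  have hd1 : 0 ≤ d1 := norm_nonneg _
  set h := min (1/2 : ℝ) (ε / (4 * (d1 + 1))) with hhdef
  have hh : 0 < h := lt_min (by norm_num) (by positivity)
  have hh2 : h ≤ 1/2 := min_le_left _ _
  have hhd1 : h * d1 < ε/4 := by
    have h1 : h ≤ ε / (4 * (d1 + 1)) := min_le_right _ _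
    have h2 : ε / (4 * (d1 + 1)) * d1 < ε/4 := by
      rw [div_mul_eq_mul_div, div_lt_div_iff₀ (by positivity) (by norm_num)]
      nlinarith
    nlinarith [mul_le_mul_of_nonneg_right h1 hd1]
  have hPseg : ∀ a : ℝ, 0 ≤ a → a ≤ 1 → u + a • (v - u) ∈ C := by
    intro a h0 h1
    apply huv
    rw [segment_eq_image']
    exact ⟨a, ⟨h0, h1⟩, rfl⟩
  have hQ : ∀ i : ℕ, ∀ a b : ℝ, 1 - i*h ≤ a → 0 ≤ a → a ≤ 1 → 0 ≤ b →
      b ≤ (1/2:ℝ)^i * a → u + a • (v-u) + b • (w-v) ∈ C := by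
    intro i
    induction i with
    | zero =>
      intro a b h1 h2 h3 h4 h5
      have ha : a = 1 := le_antisymm h3 (by simpa using h1)
      subst ha
      have he : u + (1:ℝ) • (v-u) + b • (w-v) = v + b • (w-v) := by module
      rw [he]
      apply hvw
      rw [segment_eq_image']
      exact ⟨b, ⟨h4, by simpa using h5⟩, rfl⟩
    | succ i ih =>
      intro a b h1 h2 h3 h4 h5
      have hpowpos : (0:ℝ) < (1/2:ℝ)^i := by positivity
      have hpowle1 : (1/2:ℝ)^i ≤ 1 := by
        apply pow_le_one₀ <;> norm_num
      have hps : ((1:ℝ)/2)^(i+1) = (1/2) * (1/2)^i := by ring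
      by_cases hcase : 1 - i*h ≤ a
      · exact ih a b hcase h2 h3 h4 (le_trans h5 (by rw [hps]; nlinarith))
      push_neg at hcase
      set A := 1 - (i:ℝ)*h with hAdef
      have hih : (0:ℝ) ≤ (i:ℝ)*h := by positivity
      have hA1 : A ≤ 1 := by rw [hAdef]; linarith
      have hAa : a < A := hcase
      have hA0 : 0 < A := lt_of_le_of_lt h2 hAa
      have hstep : A - a ≤ h := by
        have h1' : 1 - ((i:ℝ)+1)*h ≤ a := by push_cast at h1; linarith
        rw [hAdef]; linarith
      have hbh : b ≤ (1/2) * a := by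
        rw [hps] at h5; nlinarith
      by_cases hc2 : A ≤ 2*a
      · -- middle case: combo of column A and a point of [u,v]
        have hb2 : 2*b ≤ (1/2:ℝ)^i * A := by
          rw [hps] at h5; nlinarith
        have hmem1 : u + A•(v-u) + (2*b)•(w-v) ∈ C :=
          ih A (2*b) le_rfl hA0.le hA1 (by linarith) hb2
        have hmem2 : u + (2*a - A)•(v-u) ∈ C := hPseg _ (by linarith) (by linarith)
        have hp0 : u + a•(v-u) ∈ segment ℝ u v := by
          rw [segment_eq_image']; exact ⟨a, ⟨h2, h3⟩, rfl⟩
        have hcx := hleb _ hp0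
        have hbhalf : 2*b ≤ 1 := by nlinarith
        have hdist1 : dist (u + A•(v-u) + (2*b)•(w-v)) (u + a•(v-u)) < ε := by
          rw [dist_eq_norm]
          have hdiff : u + A•(v-u) + (2*b)•(w-v) - (u + a•(v-u))
              = (A - a)•(v-u) + (2*b)•(w-v) := by module
          rw [hdiff]
          have hle := norm_add_le ((A - a)•(v-u)) ((2*b)•(w-v))
          rw [norm_smul, norm_smul, Real.norm_eq_abs, Real.norm_eq_abs,
            abs_of_nonneg (by linarith : (0:ℝ) ≤ A - a),
            abs_of_nonneg (by linarith : (0:ℝ) ≤ 2*b)] at hle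
          have e1 : (A - a) * d1 ≤ h * d1 := mul_le_mul_of_nonneg_right hstep hd1
          have e2 : (2*b) * ‖w - v‖ ≤ 1 * ‖w - v‖ :=
            mul_le_mul_of_nonneg_right hbhalf (norm_nonneg _)
          calc ‖(A - a)•(v-u) + (2*b)•(w-v)‖ ≤ (A - a) * d1 + (2*b) * ‖w - v‖ := hle
          _ < ε := by linarith
        have hdist2 : dist (u + (2*a - A)•(v-u)) (u + a•(v-u)) < ε := by
          rw [dist_eq_norm]
          have hdiff : u + (2*a - A)•(v-u) - (u + a•(v-u)) = (a - A)•(v-u) := by module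
          rw [hdiff, norm_smul, Real.norm_eq_abs, abs_of_nonpos (by linarith : a - A ≤ 0)]
          have e1 : (A - a) * d1 ≤ h * d1 := mul_le_mul_of_nonneg_right hstep hd1
          have : -(a - A) = A - a := by ring
          rw [this]
          have hd1n : 0 ≤ h * d1 := by positivity
          linarith
        have hcomb := hcx ⟨hmem1, mem_ball.2 hdist1⟩ ⟨hmem2, mem_ball.2 hdist2⟩
          (by norm_num : (0:ℝ) ≤ 1/2) (by norm_num : (0:ℝ) ≤ 1/2) (by norm_num)
        have heq2 : (1/2:ℝ)•(u + A•(v-u) + (2*b)•(w-v)) + (1/2:ℝ)•(u + (2*a - A)•(v-u))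
            = u + a•(v-u) + b•(w-v) := by
          module
        rw [heq2] at hcomb
        exact hcomb.1
      · -- outer case: combo with u
        push_neg at hc2
        have hAsmall : A < 2*h := by linarith
        rcases eq_or_lt_of_le h2 with ha0 | ha0
        · have hb0 : b = 0 := le_antisymm (by nlinarith) h4
          have he : u + a•(v-u) + b•(w-v) = u := by rw [← ha0, hb0]; module
          rw [he]
          exact huv (left_mem_segment ℝ u v)
        · set α := a / A with hαdef
          have hα0 : 0 < α := div_pos ha0 hA0
          have hα1 : α < 1 := (div_lt_one hA0).2 hAa
          set b' := b * A / a with hb'def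
          have hb'0 : 0 ≤ b' := by positivity
          have hb'le : b' ≤ (1/2:ℝ)^(i+1) * A := by
            rw [hb'def, div_le_iff₀ ha0]
            nlinarith [h5, hA0.le]
          have hb'le2 : b' ≤ (1/2:ℝ)^i * A := le_trans hb'le (by rw [hps]; nlinarith)
          have hb'small : b' ≤ 1 := le_trans hb'le2 (by nlinarith)
          have hmem1 : u + A•(v-u) + b'•(w-v) ∈ C := ih A b' le_rfl hA0.le hA1 hb'0 hb'le2
          have hcx := hleb u (left_mem_segment ℝ u v)
          have hdistu : dist (u + A•(v-u) + b'•(w-v)) u < ε := by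
            rw [dist_eq_norm]
            have hdiff : u + A•(v-u) + b'•(w-v) - u = A•(v-u) + b'•(w-v) := by module
            rw [hdiff]
            have hle := norm_add_le (A•(v-u)) (b'•(w-v))
            rw [norm_smul, norm_smul, Real.norm_eq_abs, Real.norm_eq_abs,
              abs_of_nonneg hA0.le, abs_of_nonneg hb'0] at hle
            have e2 : b' * ‖w - v‖ ≤ 1 * ‖w - v‖ :=
              mul_le_mul_of_nonneg_right hb'small (norm_nonneg _)
            have e1 : A * d1 ≤ (2*h) * d1 := mul_le_mul_of_nonneg_right hAsmall.le hd1
            calc ‖A•(v-u) + b'•(w-v)‖ ≤ A * d1 + b' * ‖w - v‖ := hle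
            _ < ε := by linarith
          have hcomb := hcx ⟨hmem1, mem_ball.2 hdistu⟩
            ⟨huv (left_mem_segment ℝ u v), mem_ball_self hε⟩
            hα0.le (by linarith : (0:ℝ) ≤ 1 - α) (by ring)
          have hαA : α * A = a := by rw [hαdef]; field_simp
          have hαb : α * b' = b := by rw [hαdef, hb'def]; field_simp
          have heq2 : α•(u + A•(v-u) + b'•(w-v)) + (1-α)•u
              = u + a•(v-u) + b•(w-v) := by
            have he3 : α•(u + A•(v-u) + b'•(w-v)) + (1-α)•u
                = u + (α*A)•(v-u) + (α*b')•(w-v) := by module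
            rw [he3, hαA, hαb]
          rw [heq2] at hcomb
          exact hcomb.1
  set N := ⌈1/h⌉₊ with hNdef
  have hNh : 1 - (N:ℝ)*h ≤ 0 := by
    have h1 : (1:ℝ)/h ≤ (N:ℝ) := Nat.le_ceil _
    have h2 : (1/h) * h ≤ (N:ℝ) * h := mul_le_mul_of_nonneg_right h1 hh.le
    rw [one_div, inv_mul_cancel₀ hh.ne'] at h2
    linarith
  refine ⟨(1/2:ℝ)^N, by positivity, by apply pow_le_one₀ <;> norm_num, ?_⟩
  intro q hq
  rw [segment_eq_image'] at hq
  obtain ⟨t, ⟨ht0, ht1⟩, rfl⟩ := hq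
  have heq3 : u + t • (v + (1/2:ℝ)^N • (w-v) - u)
      = u + t•(v-u) + ((1/2:ℝ)^N * t)•(w-v) := by module
  show u + t • (v + (1/2:ℝ)^N • (w-v) - u) ∈ C
  rw [heq3]
  exact hQ N t _ (by linarith) ht0 ht1 (by positivity) le_rfl

end aux
/-- If `C ⊆ ℝ^m` is closed and locally convex, then for every `x ∈ C` the star
`S(x) = {y ∈ C : [x,y] ⊆ C}` is open in the subspace topology of `C`: every
`y ∈ S(x)` has an open neighborhood `V` in `ℝ^m` with `C ∩ V ⊆ S(x)`. -/
theorem star_isOpen_in_subspace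
    (m : ℕ) (C : Set (Fin m → ℝ)) (hC : IsClosed C)
    (hloc : ∀ x ∈ C, ∃ U : Set (Fin m → ℝ), IsOpen U ∧ x ∈ U ∧ Convex ℝ (C ∩ U))
    (x : Fin m → ℝ) (hx : x ∈ C) :
    ∀ y ∈ {y : Fin m → ℝ | y ∈ C ∧ segment ℝ x y ⊆ C},
      ∃ V : Set (Fin m → ℝ), IsOpen V ∧ y ∈ V ∧
        C ∩ V ⊆ {y : Fin m → ℝ | y ∈ C ∧ segment ℝ x y ⊆ C} := by
  rintro y0 ⟨hyC, hseg⟩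
  -- compactness of the segment
  have hK : IsCompact (segment ℝ x y0) := by
    rw [segment_eq_image']
    exact isCompact_Icc.image (by fun_prop)
  -- Lebesgue number
  obtain ⟨δ, hδpos, hball⟩ := lebesgue_number_lemma_of_metric hK
    (c := fun p : {p // p ∈ segment ℝ x y0} => (hloc p.1 (hseg p.2)).choose)
    (fun i => (hloc i.1 (hseg i.2)).choose_spec.1)
    (fun q hq => Set.mem_iUnion.2 ⟨⟨q, hq⟩, (hloc q (hseg hq)).choose_spec.2.1⟩)
  have hleb : ∀ p ∈ segment ℝ x y0, Convex ℝ (C ∩ Metric.ball p δ) := by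
    intro p hp
    obtain ⟨i, hi⟩ := hball p hp
    exact conv_shrink C _ _ (hloc i.1 (hseg i.2)).choose_spec.2.2 (convex_ball p δ) hi
  refine ⟨Metric.ball y0 (δ/2), Metric.isOpen_ball, Metric.mem_ball_self (by positivity), ?_⟩
  rintro z ⟨hzC, hzb⟩
  have hzy : ‖z - y0‖ < δ/2 := by rw [← dist_eq_norm]; exact Metric.mem_ball.1 hzb
  refine ⟨hzC, ?_⟩
  -- segment y0 z ⊆ C
  have hyzC : segment ℝ y0 z ⊆ C := by
    have hcx := hleb y0 (right_mem_segment ℝ x y0)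
    intro q hq
    refine (hcx.segment_subset ⟨hyC, Metric.mem_ball_self hδpos⟩
      ⟨hzC, Metric.mem_ball.2 ?_⟩ hq).1
    rw [dist_eq_norm]; linarith
  -- the sliding-parameter set
  set T : Set ℝ := {lam | lam ∈ Set.Icc (0:ℝ) 1 ∧
      segment ℝ x (y0 + lam • (z - y0)) ⊆ C} with hTdef
  have hT0 : (0:ℝ) ∈ T := ⟨⟨le_rfl, zero_le_one⟩, by simpa using hseg⟩
  have hTbdd : BddAbove T := ⟨1, fun t ht => ht.1.2⟩
  have hTclosed : IsClosed T := by
    have hrep : T = Set.Icc (0:ℝ) 1 ∩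
        ⋂ t ∈ Set.Icc (0:ℝ) 1, {lam : ℝ | x + t • (y0 + lam • (z - y0) - x) ∈ C} := by
      ext lam
      simp only [hTdef, Set.mem_setOf_eq, Set.mem_inter_iff, Set.mem_iInter]
      constructor
      · rintro ⟨hI, hs⟩
        refine ⟨hI, fun t ht => hs ?_⟩
        rw [segment_eq_image']
        exact ⟨t, ht, rfl⟩
      · rintro ⟨hI, hs⟩
        refine ⟨hI, ?_⟩
        intro q hq
        rw [segment_eq_image'] at hq
        obtain ⟨t, ht, rfl⟩ := hq
        exact hs t ht
    rw [hrep]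
    refine isClosed_Icc.inter (isClosed_biInter fun t ht => ?_)
    exact hC.preimage (by fun_prop)
  have hlamT : sSup T ∈ T := hTclosed.csSup_mem ⟨0, hT0⟩ hTbdd
  set lam := sSup T with hlamdef
  obtain ⟨⟨hlam0, hlam1⟩, hlamseg⟩ := hlamT
  rcases eq_or_lt_of_le hlam1 with heq1 | hlt1
  · have := hlamseg
    rw [heq1] at this
    simpa using this
  · exfalso
    set v := y0 + lam • (z - y0) with hvdef
    set w := v + (2⁻¹:ℝ) • (z - v) with hwdef
    have hv_mem : v ∈ segment ℝ y0 z := by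
      rw [segment_eq_image']; exact ⟨lam, ⟨hlam0, hlam1⟩, rfl⟩
    have hw_mem : w ∈ segment ℝ y0 z := by
      rw [segment_eq_image']
      refine ⟨lam + (1-lam)/2, ⟨by linarith, by linarith⟩, ?_⟩
      show y0 + (lam + (1-lam)/2) • (z - y0) = w
      rw [hwdef, hvdef]; module
    have hvw : segment ℝ v w ⊆ C :=
      fun q hq => hyzC ((convex_segment y0 z).segment_subset hv_mem hw_mem hq)
    have hwv : w - v = (2⁻¹*(1-lam)) • (z - y0) := by rw [hwdef, hvdef]; module
    have hd2 : ‖w - v‖ < (δ/2)/2 := by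
      rw [hwv, norm_smul, Real.norm_eq_abs, abs_of_nonneg (by linarith)]
      nlinarith [norm_nonneg (z - y0)]
    have hleb' : ∀ p ∈ segment ℝ x v, Convex ℝ (C ∩ Metric.ball p (δ/2)) := by
      intro p hp
      rw [segment_eq_image'] at hp
      obtain ⟨t, ⟨ht0, ht1⟩, rfl⟩ := hp
      have hp0 : x + t • (y0 - x) ∈ segment ℝ x y0 := by
        rw [segment_eq_image']; exact ⟨t, ⟨ht0, ht1⟩, rfl⟩
      apply conv_shrink C _ _ (hleb _ hp0) (convex_ball _ _)
      intro q hq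
      rw [Metric.mem_ball] at hq ⊢
      have hdd : dist (x + t • (v - x)) (x + t • (y0 - x)) < δ/2 := by
        rw [dist_eq_norm]
        have hdiff : x + t • (v - x) - (x + t • (y0 - x)) = (t*lam) • (z - y0) := by
          rw [hvdef]; module
        rw [hdiff, norm_smul, Real.norm_eq_abs,
          abs_of_nonneg (mul_nonneg ht0 hlam0)]
        have htl : t * lam ≤ 1 := by nlinarith
        have hmm := mul_le_mul_of_nonneg_right htl (norm_nonneg (z - y0))
        rw [one_mul] at hmm
        linarith
      calc dist q (x + t • (y0 - x))
          ≤ dist q (x + t • (v - x)) + dist (x + t • (v - x)) (x + t • (y0 - x)) :=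
            dist_triangle _ _ _
        _ < δ/2 + δ/2 := by exact add_lt_add hq hdd
        _ = δ := by ring
    obtain ⟨lam₀, hlam₀0, hlam₀1, hseg'⟩ :=
      lemA C x v w (δ/2) (by positivity) hlamseg hvw hd2 hleb'
    set lam' := lam + lam₀ * ((1-lam)/2) with hlam'def
    have hv' : v + lam₀ • (w - v) = y0 + lam' • (z - y0) := by
      rw [hlam'def, hwv, hvdef]; module
    have hlam'T : lam' ∈ T := by
      have hposterm : 0 ≤ lam₀ * ((1 - lam) / 2) :=
        mul_nonneg hlam₀0.le (by linarith)
      have hleterm : lam₀ * ((1 - lam) / 2) ≤ (1 - lam) / 2 := by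
        have := mul_le_mul_of_nonneg_right hlam₀1 (show (0:ℝ) ≤ (1-lam)/2 by linarith)
        linarith
      refine ⟨⟨by rw [hlam'def]; linarith, by rw [hlam'def]; linarith⟩, ?_⟩
      show segment ℝ x (y0 + lam' • (z - y0)) ⊆ C
      rw [← hv']
      exact hseg'
    have hle : lam' ≤ lam := le_csSup hTbdd hlam'T
    have hposterm2 : 0 < lam₀ * ((1 - lam) / 2) :=
      mul_pos hlam₀0 (by linarith)
    rw [hlam'def] at hle
    linarith
end
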